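/- Let λ, μ be probability vectors with λ majorizing μ. Define S(ν) = -∑_i ν_i ln ν_i and C(ν) = ∑_i ν_i (ln ν_i)^2 - S(ν)^2. Then S(μ) - S(λ) ≥ (C(λ) - C(μ)) / (S(λ) + S(μ) + 2). -/

import Mathlib

/-!
The function `φ x = x (1 - log x) ^ 2` has `φ'' x = 2 log x / x ≤ 0` on `(0, 1]`, and for a
probability vector `∑ φ (ν i) = C(ν) + (S(ν) + 1) ^ 2`. Sums of a concave function are Schur
concave (Hardy–Littlewood–Pólya): sort both vectors decreasingly, bound `φ (λ i)` by the tangent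
line of `φ` at `μ i`, and sum the first-order terms by parts, using that the tangent slopes increase
along the sorted `μ` while the prefix sums of `λ` dominate those of `μ`. Hence
`C(λ) - C(μ) ≤ (S(μ) + 1) ^ 2 - (S(λ) + 1) ^ 2 = (S(μ) - S(λ)) (S(λ) + S(μ) + 2)`, and the last
factor is positive.
-/

/-- `l` majorizes `m`: for each `k`, the sum of the `k` largest entries of `m` is at most
the sum of the `k` largest entries of `l` (phrased via subsets of each cardinality). -/
def Majorizes {ι : Type*} [Fintype ι] (l m : ι → ℝ) : Prop :=
  ∀ A : Finset ι, ∃ B : Finset ι, B.card = A.card ∧ ∑ i ∈ A, m i ≤ ∑ i ∈ B, l i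

/-- Shannon entropy in nats. -/
noncomputable def entropy {d : ℕ} (ν : Fin d → ℝ) : ℝ :=
  -∑ i, ν i * Real.log (ν i)

/-- Varentropy (variance of the modular Hamiltonian `-ln ν`). -/
noncomputable def varentropy {d : ℕ} (ν : Fin d → ℝ) : ℝ :=
  (∑ i, ν i * (Real.log (ν i)) ^ 2) - (entropy ν) ^ 2

open Finset Real

theorem ConcaveOn.le_add_mul_sub_of_hasDerivAt {S : Set ℝ} {f : ℝ → ℝ} {f' x y : ℝ}
    (hf : ConcaveOn ℝ S f) (hx : x ∈ S) (hy : y ∈ S) (hf' : HasDerivAt f f' y) :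
    f x ≤ f y + f' * (x - y) := by
  rcases lt_trichotomy x y with hxy | rfl | hyx
  · have := hf.le_slope_of_hasDerivAt hx hy hxy hf'
    rw [slope_def_field, le_div_iff₀ (sub_pos.2 hxy)] at this
    linarith
  · simp
  · have := hf.slope_le_of_hasDerivAt hy hx hyx hf'
    rw [slope_def_field, div_le_iff₀ (sub_pos.2 hyx)] at this
    linarith

theorem sum_range_mul_nonpos_of_monotoneOn {n : ℕ} {c x : ℕ → ℝ}
    (hc : MonotoneOn c (Set.Iio n)) (hx : ∀ k ≤ n, 0 ≤ ∑ i ∈ range k, x i)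
    (hx₀ : ∑ i ∈ range n, x i = 0) :
    ∑ i ∈ range n, c i * x i ≤ 0 := by
  have := sum_range_by_parts c x n
  simp only [smul_eq_mul, hx₀, mul_zero, zero_sub] at this
  rw [this, neg_nonpos]
  refine sum_nonneg fun i hi => ?_
  rw [mem_range] at hi
  have hci : c i ≤ c (i + 1) :=
    hc (Set.mem_Iio.2 (by omega)) (Set.mem_Iio.2 (by omega)) (Nat.le_succ i)
  exact mul_nonneg (sub_nonneg.2 hci) (hx _ (by omega))

theorem ConcaveOn.sum_range_le_of_sum_range_le {S : Set ℝ} {φ φ' : ℝ → ℝ}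
    (hφ : ConcaveOn ℝ S φ) (hφ' : ∀ x ∈ S, HasDerivAt φ (φ' x) x) {n : ℕ} {a b : ℕ → ℝ}
    (ha : ∀ i < n, a i ∈ S) (hb : ∀ i < n, b i ∈ S) (hb_anti : AntitoneOn b (Set.Iio n))
    (hab : ∀ k ≤ n, ∑ i ∈ range k, b i ≤ ∑ i ∈ range k, a i)
    (htot : ∑ i ∈ range n, a i = ∑ i ∈ range n, b i) :
    ∑ i ∈ range n, φ (a i) ≤ ∑ i ∈ range n, φ (b i) := by
  have hφ'_anti : AntitoneOn φ' S :=
    (hφ.antitoneOn_deriv fun x hx => (hφ' x hx).differentiableAt).congr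
      fun x hx => (hφ' x hx).deriv
  have hweight : MonotoneOn (φ' ∘ b) (Set.Iio n) := fun i hi j hj hij =>
    hφ'_anti (hb j hj) (hb i hi) (hb_anti hi hj hij)
  calc ∑ i ∈ range n, φ (a i)
      ≤ ∑ i ∈ range n, (φ (b i) + φ' (b i) * (a i - b i)) :=
        sum_le_sum fun i hi => hφ.le_add_mul_sub_of_hasDerivAt (ha i (mem_range.1 hi))
          (hb i (mem_range.1 hi)) (hφ' _ (hb i (mem_range.1 hi)))
    _ = ∑ i ∈ range n, φ (b i) + ∑ i ∈ range n, (φ' ∘ b) i * (a i - b i) := sum_add_distrib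
    _ ≤ ∑ i ∈ range n, φ (b i) := by
        refine add_le_of_nonpos_right (sum_range_mul_nonpos_of_monotoneOn hweight ?_ ?_)
        · intro k hk
          simpa [sum_sub_distrib] using hab k hk
        · rw [sum_sub_distrib, htot, sub_self]

theorem Fin.val_le_of_strictMono {k n : ℕ} {f : Fin k → Fin n} (hf : StrictMono f) (j : Fin k) :
    (j : ℕ) ≤ f j := by
  simpa using card_le_card_of_injOn f (s := Iio j) (t := Iio (f j))
    (fun i hi => by simpa using hf (by simpa using hi)) hf.injective.injOn

theorem exists_equiv_antitone {ι α : Type*} [Fintype ι] [LinearOrder α] (v : ι → α) :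
    ∃ σ : Fin (Fintype.card ι) ≃ ι, Antitone (v ∘ σ) := by
  let e := (Fintype.equivFin ι).symm
  refine ⟨(Tuple.sort (OrderDual.toDual ∘ v ∘ e)).trans e, ?_⟩
  exact monotone_toDual_comp_iff.1 (Tuple.monotone_sort (OrderDual.toDual ∘ v ∘ e))

section Enumeration

variable {ι : Type*} {n : ℕ}

noncomputable def seqAlong (σ : Fin n ≃ ι) (v : ι → ℝ) (k : ℕ) : ℝ :=
  if h : k < n then v (σ ⟨k, h⟩) else 0

@[simp]
theorem seqAlong_of_lt (σ : Fin n ≃ ι) (v : ι → ℝ) {k : ℕ} (h : k < n) :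
    seqAlong σ v k = v (σ ⟨k, h⟩) :=
  dif_pos h

theorem sum_range_seqAlong [Fintype ι] (σ : Fin n ≃ ι) (v : ι → ℝ) (F : ℝ → ℝ) :
    ∑ i ∈ range n, F (seqAlong σ v i) = ∑ i, F (v i) := by
  rw [sum_range]
  simpa using σ.sum_comp (F ∘ v)

theorem exists_card_eq_sum_range_seqAlong (σ : Fin n ≃ ι) (v : ι → ℝ) {k : ℕ} (hk : k ≤ n) :
    ∃ A : Finset ι, #A = k ∧ ∑ i ∈ range k, seqAlong σ v i = ∑ i ∈ A, v i := by
  let e : Fin k ↪ ι := (Fin.castLEEmb hk).trans σ.toEmbedding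
  refine ⟨univ.map e, by simp, ?_⟩
  rw [sum_map, sum_range]
  exact sum_congr rfl fun j _ => seqAlong_of_lt σ v _

theorem sum_le_sum_range_seqAlong {σ : Fin n ≃ ι} {v : ι → ℝ} (hσ : Antitone (v ∘ σ))
    (B : Finset ι) : ∑ i ∈ B, v i ≤ ∑ i ∈ range #B, seqAlong σ v i := by
  classical
  let B' := B.map σ.symm.toEmbedding
  have hB' : #B' = #B := card_map _
  let e := B'.orderEmbOfFin hB'
  have hBn : #B ≤ n := by simpa [hB'] using card_le_univ B'
  calc ∑ i ∈ B, v i = ∑ j ∈ B', v (σ j) := by simp [B']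
    _ = ∑ j : Fin #B, v (σ (e j)) := by
        rw [← B'.map_orderEmbOfFin_univ hB', sum_map]; rfl
    _ ≤ ∑ j : Fin #B, v (σ (Fin.castLE hBn j)) :=
        sum_le_sum fun j _ => hσ (Fin.val_le_of_strictMono e.strictMono j)
    _ = ∑ i ∈ range #B, seqAlong σ v i := by
        rw [sum_range]
        exact sum_congr rfl fun j _ => (seqAlong_of_lt σ v _).symm

end Enumeration

theorem Majorizes.sum_le_sum_of_concaveOn {ι : Type*} [Fintype ι] {l m : ι → ℝ}
    (hmaj : Majorizes l m) (htot : ∑ i, l i = ∑ i, m i) {S : Set ℝ} {φ φ' : ℝ → ℝ}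
    (hφ : ConcaveOn ℝ S φ) (hφ' : ∀ x ∈ S, HasDerivAt φ (φ' x) x)
    (hl : ∀ i, l i ∈ S) (hm : ∀ i, m i ∈ S) :
    ∑ i, φ (l i) ≤ ∑ i, φ (m i) := by
  obtain ⟨σ, hσ⟩ := exists_equiv_antitone l
  obtain ⟨τ, hτ⟩ := exists_equiv_antitone m
  have hprefix (k : ℕ) (hk : k ≤ Fintype.card ι) :
      ∑ i ∈ range k, seqAlong τ m i ≤ ∑ i ∈ range k, seqAlong σ l i := by
    obtain ⟨A, hA, hAsum⟩ := exists_card_eq_sum_range_seqAlong τ m hk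
    obtain ⟨B, hB, hAB⟩ := hmaj A
    rw [hAsum, ← hA, ← hB]
    exact hAB.trans (sum_le_sum_range_seqAlong hσ B)
  rw [← sum_range_seqAlong σ l φ, ← sum_range_seqAlong τ m φ]
  refine hφ.sum_range_le_of_sum_range_le hφ' (fun i hi => ?_) (fun i hi => ?_) ?_ hprefix ?_
  · rw [seqAlong_of_lt σ l hi]
    exact hl _
  · rw [seqAlong_of_lt τ m hi]
    exact hm _
  · intro i hi j hj hij
    rw [seqAlong_of_lt τ m hi, seqAlong_of_lt τ m hj]
    exact hτ (Fin.mk_le_mk.2 hij)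
  · simpa only [id] using
      (sum_range_seqAlong σ l id).trans (htot.trans (sum_range_seqAlong τ m id).symm)

theorem hasDerivAt_mul_one_sub_log_sq {x : ℝ} (hx : 0 < x) :
    HasDerivAt (fun x => x * (1 - log x) ^ 2) (log x ^ 2 - 1) x := by
  have h := (hasDerivAt_id' x).fun_mul (((hasDerivAt_log hx.ne').const_sub 1).fun_pow 2)
  refine h.congr_deriv ?_
  field_simp
  ring

theorem concaveOn_mul_one_sub_log_sq :
    ConcaveOn ℝ (Set.Ioc 0 1) (fun x => x * (1 - log x) ^ 2) := by
  refine concaveOn_of_hasDerivWithinAt2_nonpos (convex_Ioc 0 1)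
    (f' := fun x => log x ^ 2 - 1) (f'' := fun x => 2 * log x / x) ?_ ?_ ?_ ?_
  · exact fun x hx => (hasDerivAt_mul_one_sub_log_sq hx.1).continuousAt.continuousWithinAt
  · rw [interior_Ioc]
    exact fun x hx => (hasDerivAt_mul_one_sub_log_sq hx.1).hasDerivWithinAt
  · rw [interior_Ioc]
    intro x hx
    refine (((hasDerivAt_log hx.1.ne').fun_pow 2).sub_const 1).hasDerivWithinAt.congr_deriv ?_
    simp [div_eq_mul_inv]
  · rw [interior_Ioc]
    exact fun x hx => div_nonpos_of_nonpos_of_nonneg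
      (mul_nonpos_of_nonneg_of_nonpos zero_le_two (log_nonpos hx.1.le hx.2.le)) hx.1.le

theorem sum_mul_one_sub_log_sq {d : ℕ} (ν : Fin d → ℝ) (hν : ∑ i, ν i = 1) :
    ∑ i, ν i * (1 - log (ν i)) ^ 2 = varentropy ν + (entropy ν + 1) ^ 2 := by
  have hexpand : ∑ i, ν i * (1 - log (ν i)) ^ 2 =
      ∑ i, ν i - 2 * ∑ i, ν i * log (ν i) + ∑ i, ν i * log (ν i) ^ 2 := by
    rw [mul_sum, ← sum_sub_distrib, ← sum_add_distrib]
    exact sum_congr rfl fun i _ => by ring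
  rw [hexpand, hν, varentropy, entropy]
  ring

theorem le_one_of_sum_eq_one {ι : Type*} [Fintype ι] {ν : ι → ℝ} (hν₀ : ∀ i, 0 ≤ ν i)
    (hν : ∑ i, ν i = 1) (i : ι) : ν i ≤ 1 :=
  hν ▸ single_le_sum (fun j _ => hν₀ j) (mem_univ i)

theorem entropy_nonneg {d : ℕ} (ν : Fin d → ℝ) (hν₀ : ∀ i, 0 ≤ ν i) (hν : ∑ i, ν i = 1) :
    0 ≤ entropy ν := by
  rw [entropy, ← sum_neg_distrib]
  refine sum_nonneg fun i _ => ?_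
  simpa [negMulLog] using negMulLog_nonneg (hν₀ i) (le_one_of_sum_eq_one hν₀ hν i)

/-- If the probability vector `l` majorizes `m`, then
`S(m) - S(l) ≥ (C(l) - C(m)) / (S(l) + S(m) + 2)`. -/
theorem entropy_production_varentropy_bound {d : ℕ} (l m : Fin d → ℝ)
    (hl0 : ∀ i, 0 < l i) (hl1 : ∑ i, l i = 1)
    (hm0 : ∀ i, 0 < m i) (hm1 : ∑ i, m i = 1)
    (hmaj : Majorizes l m) :
    entropy m - entropy l ≥
      (varentropy l - varentropy m) / (entropy l + entropy m + 2) := by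
  have hl : ∀ i, l i ∈ Set.Ioc 0 1 := fun i => ⟨hl0 i, le_one_of_sum_eq_one (hl0 · |>.le) hl1 i⟩
  have hm : ∀ i, m i ∈ Set.Ioc 0 1 := fun i => ⟨hm0 i, le_one_of_sum_eq_one (hm0 · |>.le) hm1 i⟩
  have hschur := hmaj.sum_le_sum_of_concaveOn (hl1.trans hm1.symm) concaveOn_mul_one_sub_log_sq
    (fun x hx => hasDerivAt_mul_one_sub_log_sq hx.1) hl hm
  rw [sum_mul_one_sub_log_sq l hl1, sum_mul_one_sub_log_sq m hm1] at hschur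
  have hSl := entropy_nonneg l (hl0 · |>.le) hl1
  have hSm := entropy_nonneg m (hm0 · |>.le) hm1
  rw [ge_iff_le, div_le_iff₀ (by linarith)]
  nlinarith
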